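/- For every natural i ≥ 1, the series P_i = 1 + Σ_{n=1}^∞ (−1)^n · Q_{i,n}/(2n+1), with Q_{i,n} = ∏_{j=1}^{n} ((i+1)/(2j) − 1), converges. -/

import Mathlib

/-!
Since `Q i (n + 1) = Q i n * ((i + 1) / 2 - (n + 1)) / (n + 1)`, once `n + 1 ≥ (i + 1) / 2`
the quantity `|Q i n| * n` can only decrease when `i ≥ 1`. Hence `|Q i n| = O(1 / n)`, the
terms of the series are `O(1 / n²)`, and the series converges absolutely.
-/

open Finset

noncomputable def Q (i n : ℕ) : ℝ :=
  ∏ j ∈ Finset.Icc 1 n, (((i : ℝ) + 1) / (2 * (j : ℝ)) - 1)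

lemma Q_succ (i n : ℕ) : Q i (n + 1) = Q i n * (((i : ℝ) + 1) / (2 * ((n : ℝ) + 1)) - 1) := by
  rw [Q, prod_Icc_succ_top (by omega : 1 ≤ n + 1), ← Q]
  push_cast
  ring

lemma abs_Q_succ_mul_le {i n : ℕ} (hi : 1 ≤ i) (hn : i + 1 ≤ 2 * (n + 1)) :
    |Q i (n + 1)| * (n + 1 : ℕ) ≤ |Q i n| * n := by
  have hi' : (1 : ℝ) ≤ i := by exact_mod_cast hi
  have hn' : (i : ℝ) + 1 ≤ 2 * ((n : ℝ) + 1) := by exact_mod_cast hn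
  have hfactor : |((i : ℝ) + 1) / (2 * ((n : ℝ) + 1)) - 1| * ((n : ℝ) + 1) ≤ n := by
    rw [abs_sub_comm, abs_of_nonneg (by rw [sub_nonneg, div_le_one (by positivity)]; exact hn'),
      sub_mul, div_mul_eq_mul_div, mul_div_mul_right _ _ (by positivity)]
    linarith
  rw [Q_succ, abs_mul, Nat.cast_succ, mul_assoc]
  exact mul_le_mul_of_nonneg_left hfactor (abs_nonneg _)

lemma abs_Q_mul_le {i n : ℕ} (hi : 1 ≤ i) (hn : i ≤ n) : |Q i n| * n ≤ |Q i i| * i := by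
  induction n, hn using Nat.le_induction with
  | base => rfl
  | succ n hn ih => exact (abs_Q_succ_mul_le hi (by omega)).trans ih

lemma abs_Q_le {i n : ℕ} (hi : 1 ≤ i) (hn : i ≤ n) : |Q i n| ≤ |Q i i| * i / n := by
  have hn0 : (0 : ℝ) < n := by exact_mod_cast (by omega : 0 < n)
  rw [le_div_iff₀ hn0]
  exact abs_Q_mul_le hi hn

theorem stmt_9 (i : ℕ) (hi : 1 ≤ i) :
    Summable (fun n : ℕ => (-1 : ℝ) ^ (n + 1) * Q i (n + 1) / (2 * ((n : ℝ) + 1) + 1)) := by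
  set C := |Q i i| * i
  have hsq : Summable (fun n : ℕ => C * (1 / ((n + 1 : ℕ) : ℝ) ^ 2)) :=
    ((summable_nat_add_iff 1).mpr (Real.summable_one_div_nat_pow.mpr one_lt_two)).mul_left C
  refine hsq.of_norm_bounded_eventually_nat (Filter.eventually_atTop.mpr ⟨i, fun n hn => ?_⟩)
  have hn1 : (0 : ℝ) < (n + 1 : ℕ) := by positivity
  calc ‖(-1 : ℝ) ^ (n + 1) * Q i (n + 1) / (2 * ((n : ℝ) + 1) + 1)‖
      = |Q i (n + 1)| / (2 * ((n + 1 : ℕ) : ℝ) + 1) := by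
        rw [Real.norm_eq_abs, abs_div, abs_mul, abs_pow, abs_neg, abs_one, one_pow, one_mul,
          abs_of_pos (by positivity : (0 : ℝ) < 2 * ((n : ℝ) + 1) + 1), Nat.cast_succ]
    _ ≤ |Q i (n + 1)| / ((n + 1 : ℕ) : ℝ) :=
        div_le_div_of_nonneg_left (abs_nonneg _) hn1 (by linarith)
    _ ≤ C / ((n + 1 : ℕ) : ℝ) / ((n + 1 : ℕ) : ℝ) :=
        div_le_div_of_nonneg_right (abs_Q_le hi (by omega)) hn1.le
    _ = C * (1 / ((n + 1 : ℕ) : ℝ) ^ 2) := by ring
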